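/- arXiv:2401.14138 — 2 statements merged into one kernel-verified Lean document; each statement's English description precedes it below -/
import Mathlib

section
/- Let p be a prime with p ≡ 1 (mod 4), let e be a positive integer, and set n = p^e. Then the integer 𝒫_n = ∏_θ F̃_n(θ), with θ ranging over the nontrivial n-th roots of unity in ℂ, is coprime to p. -/
/-!
`𝒫 n` is the resultant of `1 + x + ⋯ + x^(n-1)` and the integer polynomial `F̃_n`, hence an
integer. Modulo `p` the first polynomial becomes `(x - 1)^(n-1)`, since `n` is a power of `p`, and
`F̃_n` becomes `(L_n / n) • x^n`, since `p * k ∣ L_n` for `0 < k < n`. So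
`𝒫 n ≡ (L_n / n)^(n-1) (mod p)`, and `L_n / n` is prime to `p` because `v_p(L_n) = e`.
-/

open Polynomial BigOperators

/-- `F n` is the truncated logarithmic polynomial `1 + x + x²/2 + ⋯ + xⁿ/n ∈ ℚ[x]`. -/
noncomputable def F (n : ℕ) : Polynomial ℚ :=
  1 + ∑ k ∈ Finset.Icc 1 n, Polynomial.C ((k : ℚ)⁻¹) * Polynomial.X ^ k

/-- `Ln n = lcm {1, 2, …, n}`. -/
def Ln (n : ℕ) : ℕ := (Finset.Icc 1 n).lcm id

/-- `Ftilde n = Ln n • F n`, a polynomial with integer coefficients. -/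
noncomputable def Ftilde (n : ℕ) : Polynomial ℚ := Polynomial.C ((Ln n : ℚ)) * F n

/-- The resultant `Res(P, Q)` of two polynomials over `ℚ`, computed in `ℂ` via the
product formula `Res(P,Q) = lc(P)^(deg Q) * ∏_{P(r)=0} Q(r)` (roots with multiplicity). -/
noncomputable def resC (P Q : Polynomial ℚ) : ℂ :=
  ((P.leadingCoeff : ℂ)) ^ Q.natDegree *
    ((P.map (algebraMap ℚ ℂ)).roots.map (fun r => (Q.map (algebraMap ℚ ℂ)).eval r)).prod

/-- The discriminant `disc P = (−1)^(n(n−1)/2) ⬝ a_n⁻¹ ⬝ Res(P, P′)`, as a complex number. -/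
noncomputable def discC (P : Polynomial ℚ) : ℂ :=
  (-1) ^ (P.natDegree.choose 2) * ((P.leadingCoeff : ℂ))⁻¹ * resC P (Polynomial.derivative P)

/-- `𝒫 n = ∏_θ F̃_n(θ)`, the product over the nontrivial `n`-th roots of unity in `ℂ`. -/
noncomputable def P (n : ℕ) : ℂ :=
  ∏ θ ∈ (Polynomial.nthRootsFinset n (1 : ℂ)).erase 1, (Polynomial.aeval θ) (Ftilde n)

/-- `Xc m ω = ∏_{k=1}^{m−1} (1/m + ω^k + ω^{2k}/2 + ⋯ + ω^{(m−1)k}/(m−1))`. -/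
noncomputable def Xc (m : ℕ) (ω : ℂ) : ℂ :=
  ∏ k ∈ Finset.Icc 1 (m - 1), ((m : ℂ)⁻¹ + ∑ j ∈ Finset.Icc 1 (m - 1), ω ^ (j * k) / (j : ℂ))

/-- `Y m = 1 + 1/2 + ⋯ + 1/m ∈ ℚ`. -/
def Y (m : ℕ) : ℚ := ∑ j ∈ Finset.Icc 1 m, (j : ℚ)⁻¹

open Finset

lemma Ln_eq_lcmUpto (n : ℕ) : Ln n = Nat.lcmUpto n := rfl

namespace Nat

lemma mul_dvd_lcmUpto_prime_pow {p e k : ℕ} (hp : p.Prime) (hk : k ≠ 0) (hke : k < p ^ e) :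
    p * k ∣ lcmUpto (p ^ e) := by
  rw [← factorization_le_iff_dvd (mul_ne_zero hp.ne_zero hk) (lcmUpto_ne_zero _)]
  intro q
  by_cases hq : q.Prime
  · rw [factorization_lcmUpto _ hq, factorization_mul hp.ne_zero hk, Finsupp.add_apply,
      hp.factorization]
    have hk_le : q ^ k.factorization q ≤ k := ordProj_le q hk
    rcases eq_or_ne p q with rfl | hpq
    · have : k.factorization p < e := (pow_lt_pow_iff_right₀ hp.one_lt).1 (hk_le.trans_lt hke)
      rw [Finsupp.single_eq_same, log_pow hp.one_lt]
      omega
    · rw [Finsupp.single_eq_of_ne' hpq, zero_add]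
      exact le_log_of_pow_le hq.one_lt (hk_le.trans hke.le)
  · simp [factorization_eq_zero_of_not_prime _ hq]

lemma not_dvd_lcmUpto_prime_pow_div {p : ℕ} (hp : p.Prime) (e : ℕ) :
    ¬ p ∣ lcmUpto (p ^ e) / p ^ e := by
  have h := factorization_lcmUpto (p ^ e) hp
  rw [log_pow hp.one_lt] at h
  simpa [h] using not_dvd_ordCompl hp (lcmUpto_ne_zero (p ^ e))

end Nat

section GeomSum

variable {R : Type*} [CommRing R]

lemma map_geom_sum_X {S : Type*} [CommRing S] (f : R →+* S) (n : ℕ) :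
    (∑ i ∈ range n, (X : R[X]) ^ i).map f = ∑ i ∈ range n, X ^ i := by
  simp only [Polynomial.map_sum, Polynomial.map_pow, map_X]

lemma natDegree_geom_sum_X [Nontrivial R] {n : ℕ} (hn : n ≠ 0) :
    (∑ i ∈ range n, (X : R[X]) ^ i).natDegree = n - 1 := by
  have h := congrArg natDegree (mul_geom_sum (X : R[X]) n)
  rw [← C_1, (monic_X_sub_C 1).natDegree_mul (monic_geom_sum_X hn), natDegree_X_sub_C,
    natDegree_X_pow_sub_C] at h
  omega

lemma roots_geom_sum_X [IsDomain R] [DecidableEq R] {n : ℕ} (hn : n ≠ 0) :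
    (∑ i ∈ range n, (X : R[X]) ^ i).roots = (nthRoots n (1 : R)).erase 1 := by
  have h := congrArg roots (mul_geom_sum (X : R[X]) n)
  rw [roots_mul, ← C_1, roots_X_sub_C] at h
  · rw [nthRoots, ← h, Multiset.singleton_add, Multiset.erase_cons_head]
  · rw [mul_geom_sum, ← C_1]
    exact X_pow_sub_C_ne_zero (Nat.pos_of_ne_zero hn) 1

lemma geom_sum_X_eq_X_sub_one_pow [IsDomain R] (p : ℕ) [Fact p.Prime] [CharP R p] (e : ℕ) :
    ∑ i ∈ range (p ^ e), (X : R[X]) ^ i = (X - 1) ^ (p ^ e - 1) := by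
  have hX : (X : R[X]) - 1 ≠ 0 := by simpa using X_sub_C_ne_zero (1 : R)
  apply mul_left_cancel₀ hX
  rw [mul_geom_sum, ← pow_succ', Nat.sub_add_cancel (Nat.one_le_pow _ _ (Fact.out : p.Prime).pos),
    sub_pow_char_pow, one_pow]

end GeomSum

lemma dvd_Ln {k n : ℕ} (hk : k ∈ Icc 1 n) : k ∣ Ln n := dvd_lcm hk

noncomputable def FtildeInt (n : ℕ) : ℤ[X] :=
  C (Ln n : ℤ) + ∑ k ∈ Icc 1 n, C ((Ln n / k : ℕ) : ℤ) * X ^ k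

lemma map_FtildeInt (n : ℕ) : (FtildeInt n).map (Int.castRingHom ℚ) = Ftilde n := by
  simp only [FtildeInt, Ftilde, F, Polynomial.map_add, Polynomial.map_sum, Polynomial.map_mul,
    Polynomial.map_pow, Polynomial.map_C, map_X, Int.coe_castRingHom, Int.cast_natCast, mul_add,
    mul_one, mul_sum, ← mul_assoc, ← C_mul]
  congr 1
  refine sum_congr rfl fun k hk => ?_
  have hk0 : (k : ℚ) ≠ 0 := by have := (mem_Icc.1 hk).1; positivity
  rw [Nat.cast_div (dvd_Ln hk) hk0, div_eq_mul_inv]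

lemma natDegree_FtildeInt_le (n : ℕ) : (FtildeInt n).natDegree ≤ n := by
  refine natDegree_add_le_of_degree_le ((natDegree_C _).trans_le (Nat.zero_le n)) ?_
  refine natDegree_sum_le_of_forall_le _ _ fun k hk => ?_
  exact natDegree_C_mul_X_pow_le _ k |>.trans (mem_Icc.1 hk).2

lemma map_FtildeInt_zmod {p e : ℕ} [hp : Fact p.Prime] (he : e ≠ 0) :
    (FtildeInt (p ^ e)).map (Int.castRingHom (ZMod p)) =
      C ((Ln (p ^ e) / p ^ e : ℕ) : ZMod p) * X ^ (p ^ e) := by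
  have hcast {m : ℕ} (h : p ∣ m) : (m : ZMod p) = 0 := (ZMod.natCast_eq_zero_iff m p).2 h
  have hn : p ^ e ∈ Icc 1 (p ^ e) := mem_Icc.2 ⟨Nat.one_le_pow _ _ hp.out.pos, le_rfl⟩
  simp only [FtildeInt, Polynomial.map_add, Polynomial.map_sum, Polynomial.map_mul,
    Polynomial.map_pow, Polynomial.map_C, map_X, Int.coe_castRingHom, Int.cast_natCast,
    Ln_eq_lcmUpto]
  rw [sum_eq_single_of_mem _ hn, hcast, C_0, zero_add]
  · simpa using Nat.mul_dvd_lcmUpto_prime_pow hp.out one_ne_zero (Nat.one_lt_pow he hp.out.one_lt)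
  · intro k hk hkn
    obtain ⟨hk1, hkn'⟩ := mem_Icc.1 hk
    rw [hcast, C_0, zero_mul]
    exact (Nat.dvd_div_iff_mul_dvd (dvd_Ln hk)).2 <| mul_comm k p ▸
      Nat.mul_dvd_lcmUpto_prime_pow hp.out (by omega) (lt_of_le_of_ne hkn' hkn)

lemma P_eq_resultant {n : ℕ} (hn : n ≠ 0) :
    P n = resultant (∑ i ∈ range n, X ^ i) (FtildeInt n) (n - 1) n := by
  classical
  have hroots : (nthRootsFinset n (1 : ℂ)).val = nthRoots n 1 := by
    rw [nthRootsFinset_def, Multiset.toFinset_val,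
      ((Complex.isPrimitiveRoot_exp n hn).nthRoots_one_nodup).dedup]
  have hmonic : (∑ i ∈ range n, (X : ℂ[X]) ^ i).Monic := monic_geom_sum_X hn
  rw [← eq_intCast (Int.castRingHom ℂ), ← resultant_map_map, map_geom_sum_X,
    ← natDegree_geom_sum_X (R := ℂ) hn, resultant_eq_prod_eval _ _ _
    (natDegree_map_le.trans (natDegree_FtildeInt_le n)) (IsAlgClosed.splits _),
    hmonic.leadingCoeff, one_pow, one_mul, roots_geom_sum_X hn, P, prod_eq_multiset_prod,
    erase_val, hroots]
  refine congrArg _ (Multiset.map_congr rfl fun θ _ => ?_)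
  rw [← map_FtildeInt, ← algebraMap_int_eq, aeval_map_algebraMap, aeval_def, eval₂_eq_eval_map,
    algebraMap_int_eq]

theorem stmt5_general (p e n : ℕ) (hp : p.Prime) (he : 0 < e) (hn : n = p ^ e) :
    ∃ z : ℤ, (z : ℂ) = P n ∧ IsCoprime z (p : ℤ) := by
  have := Fact.mk hp
  subst hn
  refine ⟨_, (P_eq_resultant (pow_ne_zero e hp.ne_zero)).symm, ?_⟩
  have hres : ((resultant (∑ i ∈ range (p ^ e), X ^ i) (FtildeInt (p ^ e)) (p ^ e - 1) (p ^ e) : ℤ)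
      : ZMod p) = ((Ln (p ^ e) / p ^ e : ℕ) : ZMod p) ^ (p ^ e - 1) := by
    rw [← eq_intCast (Int.castRingHom (ZMod p)), ← resultant_map_map, map_FtildeInt_zmod he.ne',
      map_geom_sum_X, geom_sum_X_eq_X_sub_one_pow p e, ← C_1,
      resultant_X_sub_C_pow_left _ _ _ _ (natDegree_C_mul_X_pow_le _ _)]
    simp
  refine ((Nat.prime_iff_prime_int.1 hp).coprime_iff_not_dvd.2 ?_).symm
  rw [← ZMod.intCast_zmod_eq_zero_iff_dvd, hres]
  exact pow_ne_zero _ ((ZMod.natCast_eq_zero_iff _ p).not.2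
    (Nat.not_dvd_lcmUpto_prime_pow_div hp e))

/-- If `p ≡ 1 (mod 4)` is prime, `e ≥ 1` and `n = p^e`, then the integer
`𝒫 n` is coprime to `p`. -/
theorem stmt5 (p e n : ℕ) (hp : p.Prime) (hp4 : p % 4 = 1) (he : 0 < e) (hn : n = p ^ e) :
    ∃ z : ℤ, (z : ℂ) = P n ∧ IsCoprime z (p : ℤ) :=
  stmt5_general p e n hp he hn
end

section
/- Let p be a prime with p ≡ 1 (mod 4), let e be an odd positive integer, and set n = p^e. Then the discriminant of F_n(x) is not the square of a rational number. -/
open Polynomial BigOperators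

/-!
The derivative `F_n' = 1 + x + ⋯ + x^(n-1)` is monic with the nontrivial `n`-th roots of unity `ζ`
as roots, so for `n ≡ 1 (mod 4)` the discriminant is `disc F_n = n ∏_ζ F_n(ζ)`. Let `L` be the
prime-to-`p` part of `n!`. For `1 ≤ k < n = p^e` the integer `L n / k` is divisible by `p`, hence
`L n F_n(ζ) ≡ L (mod p)` among algebraic integers and `L^(n-1) n^(n-2) disc F_n ≡ L^(n-1) (mod p)`.
If `disc F_n = r²` with `r ∈ ℚ`, the difference is `p` times a rational algebraic integer, i.e. an
integer, so `L^(n-1) n^(n-2) r²` is an integer prime to `p`; but its `p`-adic valuation is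
`(n-2) e + 2 v_p(r)`, which is odd.
-/

open Finset
open scoped Nat

lemma derivative_F (n : ℕ) : derivative (F n) = ∑ i ∈ range n, (X : ℚ[X]) ^ i := by
  rw [F, derivative_add, derivative_one, zero_add, derivative_sum, ← Ico_add_one_right_eq_Icc,
    sum_Ico_eq_sum_range, add_tsub_cancel_right]
  refine sum_congr rfl fun i _ => ?_
  rw [derivative_C_mul_X_pow, add_tsub_cancel_left, Nat.cast_add, Nat.cast_one, add_comm,
    inv_mul_cancel₀ (Nat.cast_add_one_ne_zero i), C_1, one_mul]

lemma coeff_F_of_pos (n : ℕ) {m : ℕ} (hm : 0 < m) :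
    (F n).coeff m = if m ≤ n then (m : ℚ)⁻¹ else 0 := by
  simp [F, coeff_one, hm.ne', coeff_X_pow, Nat.one_le_iff_ne_zero.2 hm.ne']

lemma natDegree_F (n : ℕ) : (F n).natDegree = n := by
  rcases Nat.eq_zero_or_pos n with rfl | hn
  · simp [F]
  refine natDegree_eq_of_le_of_coeff_ne_zero (natDegree_le_iff_coeff_eq_zero.2 fun m hm => ?_) ?_
  · rw [coeff_F_of_pos n (by omega), if_neg (by exact_mod_cast hm.not_ge)]
  · simp [coeff_F_of_pos n hn, hn.ne']

lemma leadingCoeff_F {n : ℕ} (hn : n ≠ 0) : (F n).leadingCoeff = (n : ℚ)⁻¹ := by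
  rw [leadingCoeff, natDegree_F, coeff_F_of_pos n (Nat.pos_of_ne_zero hn), if_pos le_rfl]

lemma eval_map_F (n : ℕ) (z : ℂ) :
    eval z ((F n).map (algebraMap ℚ ℂ)) = 1 + ∑ k ∈ Icc 1 n, z ^ k / k := by
  simp [F, div_eq_inv_mul]

lemma resC_eq_resultant (P Q : ℚ[X]) :
    resC P Q = resultant (P.map (algebraMap ℚ ℂ)) (Q.map (algebraMap ℚ ℂ)) P.natDegree
      Q.natDegree := by
  have h := resultant_eq_prod_eval (P.map (algebraMap ℚ ℂ)) (Q.map (algebraMap ℚ ℂ))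
    Q.natDegree natDegree_map_le (IsAlgClosed.splits _)
  rw [natDegree_map, leadingCoeff_map] at h
  rw [h, resC]
  rfl

lemma resC_comm (P Q : ℚ[X]) : resC P Q = (-1) ^ (P.natDegree * Q.natDegree) * resC Q P := by
  rw [resC_eq_resultant, resC_eq_resultant, resultant_comm]

lemma discC_eq_prod_eval_roots_derivative (P : ℚ[X]) :
    discC P = (-1) ^ P.natDegree.choose 2 * (P.leadingCoeff : ℂ)⁻¹ *
      ((derivative P).leadingCoeff : ℂ) ^ P.natDegree *
      (((derivative P).map (algebraMap ℚ ℂ)).roots.map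
        fun ζ => eval ζ (P.map (algebraMap ℚ ℂ))).prod := by
  rw [discC, resC_comm, natDegree_derivative, (Nat.even_mul_pred_self _).neg_one_pow, one_mul,
    resC]
  ring

lemma discC_F {n : ℕ} (hn : n % 4 = 1) :
    discC (F n) = n *
      (((derivative (F n)).map (algebraMap ℚ ℂ)).roots.map
        fun ζ => eval ζ ((F n).map (algebraMap ℚ ℂ))).prod := by
  have hn0 : n ≠ 0 := by omega
  have hsign : Even (n.choose 2) := by
    obtain ⟨k, hk⟩ : 4 ∣ n * (n - 1) := Dvd.dvd.mul_left (by omega) n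
    exact ⟨k, by rw [Nat.choose_two_right, hk]; omega⟩
  rw [discC_eq_prod_eval_roots_derivative, leadingCoeff_derivative, natDegree_F,
    leadingCoeff_F hn0, hsign.neg_one_pow]
  simp [hn0]

lemma pow_eq_one_of_mem_roots_derivative_F {n : ℕ} {ζ : ℂ}
    (hζ : ζ ∈ ((derivative (F n)).map (algebraMap ℚ ℂ)).roots) : ζ ^ n = 1 := by
  have h : ∑ i ∈ range n, ζ ^ i = 0 := by
    simpa [derivative_F, eval_finsetSum] using (mem_roots'.1 hζ).2
  rw [← sub_eq_zero, ← geom_sum_mul, h, zero_mul]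

lemma card_roots_derivative_F (n : ℕ) :
    Multiset.card ((derivative (F n)).map (algebraMap ℚ ℂ)).roots = n - 1 := by
  rw [← (IsAlgClosed.splits _).natDegree_eq_card_roots, natDegree_map, natDegree_derivative,
    natDegree_F]

lemma Nat.mul_dvd_pow_mul_ordCompl_factorial {p e m k : ℕ} (hp : p.Prime) (hk0 : k ≠ 0)
    (hkm : k ≤ m) (hke : k < p ^ e) : p * k ∣ p ^ e * ordCompl[p] m ! := by
  have hv : k.factorization p < e :=
    (Nat.pow_lt_pow_iff_right hp.one_lt).1 ((Nat.ordProj_le p hk0).trans_lt hke)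
  calc p * k = p ^ (k.factorization p + 1) * ordCompl[p] k := by
        rw [pow_succ', mul_assoc, Nat.ordProj_mul_ordCompl_eq_self]
    _ ∣ p ^ e * ordCompl[p] m ! :=
        mul_dvd_mul (pow_dvd_pow p hv)
          (Nat.ordCompl_dvd_ordCompl_of_dvd (Nat.dvd_factorial (Nat.pos_of_ne_zero hk0) hkm) p)

lemma exists_ordCompl_factorial_mul_eval_F {p e n : ℕ} (hp : p.Prime) (he : 0 < e)
    (hn : n = p ^ e) {ζ : ℂ} (hζ : ζ ^ n = 1) :
    ∃ T ∈ integralClosure ℤ ℂ, ((ordCompl[p] n ! : ℕ) * n : ℂ) *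
      eval ζ ((F n).map (algebraMap ℚ ℂ)) = (ordCompl[p] n ! : ℕ) + p * T := by
  set L := ordCompl[p] n !
  have hn2 : 2 ≤ n := hn ▸ hp.two_le.trans (Nat.le_self_pow he.ne' p)
  have hp0 : (p : ℂ) ≠ 0 := by exact_mod_cast hp.ne_zero
  have hn0 : (n : ℂ) ≠ 0 := by exact_mod_cast (show n ≠ 0 by omega)
  have hζint : ζ ∈ integralClosure ℤ ℂ :=
    IsIntegral.of_pow (by omega) (hζ ▸ isIntegral_one)
  have hdvd : ∀ k ∈ Icc 1 (n - 1), p * k ∣ n * L := fun k hk => by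
    rw [mem_Icc] at hk
    exact hn ▸ Nat.mul_dvd_pow_mul_ordCompl_factorial hp (by omega) (by omega) (by omega)
  have hterm : ∀ k ∈ Icc 1 (n - 1),
      ((n * L : ℕ) : ℂ) * (ζ ^ k / k) = p * (((n * L / (p * k) : ℕ) : ℂ) * ζ ^ k) := fun k hk => by
    have hk0 : (k : ℂ) ≠ 0 := Nat.cast_ne_zero.2 (by have := (mem_Icc.1 hk).1; omega)
    rw [Nat.cast_div (hdvd k hk) (by push_cast; exact mul_ne_zero hp0 hk0)]
    push_cast
    field_simp
  have hsplit : ∑ k ∈ Icc 1 n, ζ ^ k / k = ∑ k ∈ Icc 1 (n - 1), ζ ^ k / k + (n : ℂ)⁻¹ := by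
    obtain ⟨m, rfl⟩ := Nat.exists_eq_add_one.2 (show 0 < n by omega)
    rw [sum_Icc_succ_top (by omega), hζ, add_tsub_cancel_right, one_div]
  have hp_dvd : p ∣ n * L := by simpa using hdvd 1 (by simp; omega)
  set T : ℂ := ((n * L / p : ℕ) : ℂ) + ∑ k ∈ Icc 1 (n - 1), ((n * L / (p * k) : ℕ) : ℂ) * ζ ^ k
  refine ⟨T, add_mem (natCast_mem _ _)
    (sum_mem fun k _ => mul_mem (natCast_mem _ _) (pow_mem hζint k)), ?_⟩
  calc ((L : ℕ) * n : ℂ) * eval ζ ((F n).map (algebraMap ℚ ℂ))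
      = ((n * L : ℕ) : ℂ) + ∑ k ∈ Icc 1 (n - 1), ((n * L : ℕ) : ℂ) * (ζ ^ k / k) + L := by
        rw [eval_map_F, hsplit, ← mul_sum]
        push_cast
        field_simp
        ring
    _ = L + p * T := by
        rw [sum_congr rfl hterm, ← mul_sum]
        simp only [T, Nat.cast_div hp_dvd hp0]
        field_simp
        ring

lemma Multiset.exists_prod_eq_pow_add_mul {R S : Type*} [CommRing R] [SetLike S R]
    [SubringClass S R] {A : S} {c q : R} (hc : c ∈ A) (hq : q ∈ A) (s : Multiset R)
    (hs : ∀ x ∈ s, ∃ t ∈ A, x = c + q * t) :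
    ∃ t ∈ A, s.prod = c ^ Multiset.card s + q * t := by
  induction s using Multiset.induction with
  | empty => exact ⟨0, zero_mem A, by simp⟩
  | cons x s ih =>
    obtain ⟨t, ht, hst⟩ := ih fun y hy => hs y (Multiset.mem_cons_of_mem hy)
    obtain ⟨u, hu, rfl⟩ := hs x (Multiset.mem_cons_self x s)
    refine ⟨u * c ^ Multiset.card s + c * t + q * u * t, by aesop, ?_⟩
    rw [Multiset.prod_cons, hst, Multiset.card_cons, pow_succ]
    ring

lemma exists_intCast_eq_of_isIntegral {K : Type*} [Field K] [CharZero K] {x : ℚ}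
    (hx : IsIntegral ℤ (x : K)) : ∃ z : ℤ, (z : ℚ) = x :=
  IsIntegrallyClosed.isIntegral_iff.1 <|
    (isIntegral_algebraMap_iff (algebraMap ℚ K).injective).1 (by simpa using hx)

lemma natCast_mul_sq_ne_intCast {p a : ℕ} (hp : p.Prime) (ha : Odd (padicValNat p a)) {c : ℤ}
    (hc : ¬ (p : ℤ) ∣ c) (r : ℚ) : (a : ℚ) * r ^ 2 ≠ c := by
  have := Fact.mk hp
  intro h
  have hc0 : c ≠ 0 := by rintro rfl; exact hc (dvd_zero _)
  have ha0 : a ≠ 0 := by rintro rfl; simp at ha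
  have hr0 : r ≠ 0 := by rintro rfl; exact hc0 (by exact_mod_cast (by simpa using h.symm))
  have hv := congrArg (padicValRat p) h
  rw [padicValRat.mul (by exact_mod_cast ha0) (pow_ne_zero 2 hr0), padicValRat.pow,
    padicValRat.of_nat, padicValRat.of_int, padicValInt.eq_zero_of_not_dvd hc] at hv
  have : Even (padicValNat p a) := ⟨(-padicValRat p r).toNat, by omega⟩
  exact Nat.not_even_iff_odd.2 ha this

lemma natCast_mul_sq_ne_add_mul {K : Type*} [Field K] [CharZero K] {p a : ℕ} (hp : p.Prime)
    (ha : Odd (padicValNat p a)) {c : ℤ} (hc : ¬ (p : ℤ) ∣ c) {T : K}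
    (hT : T ∈ integralClosure ℤ K) (r : ℚ) : (a : K) * (r : K) ^ 2 ≠ c + p * T := by
  intro h
  have hp0 : (p : ℚ) ≠ 0 := by exact_mod_cast hp.ne_zero
  have hT_eq : ((((a : ℚ) * r ^ 2 - c) / p : ℚ) : K) = T := by
    push_cast
    rw [h, add_sub_cancel_left, mul_div_cancel_left₀ _ (by exact_mod_cast hp0)]
  obtain ⟨z, hz⟩ := exists_intCast_eq_of_isIntegral (hT_eq ▸ hT)
  refine natCast_mul_sq_ne_intCast hp ha (c := c + p * z) ?_ r ?_
  · rwa [dvd_add_left (dvd_mul_right _ z)]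
  · push_cast
    rw [hz]
    field_simp
    ring

lemma exists_mul_discC_F_eq {p e n : ℕ} (hp : p.Prime) (he : 0 < e) (hn : n = p ^ e)
    (hn4 : n % 4 = 1) :
    ∃ T ∈ integralClosure ℤ ℂ,
      ((ordCompl[p] n ! ^ (n - 1) * n ^ (n - 2) : ℕ) : ℂ) * discC (F n) =
        ((ordCompl[p] n ! : ℕ) : ℂ) ^ (n - 1) + p * T := by
  have hn2 : 2 ≤ n := hn ▸ hp.two_le.trans (Nat.le_self_pow he.ne' p)
  set L := ordCompl[p] n !
  set roots := ((derivative (F n)).map (algebraMap ℚ ℂ)).roots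
  obtain ⟨T, hT, hprod⟩ := Multiset.exists_prod_eq_pow_add_mul (A := integralClosure ℤ ℂ)
    (natCast_mem _ L) (natCast_mem _ p)
    (roots.map fun ζ => (L * n : ℂ) * eval ζ ((F n).map (algebraMap ℚ ℂ))) fun x hx => by
      obtain ⟨ζ, hζ, rfl⟩ := Multiset.mem_map.1 hx
      exact exists_ordCompl_factorial_mul_eval_F hp he hn (pow_eq_one_of_mem_roots_derivative_F hζ)
  refine ⟨T, hT, ?_⟩
  rw [Multiset.card_map, card_roots_derivative_F, Multiset.prod_map_mul, Multiset.map_const',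
    Multiset.prod_replicate, card_roots_derivative_F] at hprod
  rw [discC_F hn4, ← hprod, show n - 1 = n - 2 + 1 by omega]
  push_cast
  ring

theorem stmt6_general (p e n : ℕ) (hp : p.Prime) (hp4 : p % 4 = 1) (heo : Odd e)
    (hn : n = p ^ e) :
    ¬ ∃ r : ℚ, (r : ℂ) ^ 2 = discC (F n) := by
  rintro ⟨r, hr⟩
  set L := ordCompl[p] n !
  have hn4 : n % 4 = 1 := by rw [hn, Nat.pow_mod, hp4, one_pow, Nat.one_mod]
  have hn3 : 3 ≤ n := by
    have : p ≤ n := hn ▸ Nat.le_self_pow heo.pos.ne' p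
    have := hp.two_le
    omega
  have hL : ¬ p ∣ L := Nat.not_dvd_ordCompl hp (Nat.factorial_ne_zero n)
  have hval : Odd (padicValNat p (L ^ (n - 1) * n ^ (n - 2))) := by
    have := Fact.mk hp
    have hL0 : L ≠ 0 := (Nat.ordCompl_pos p (Nat.factorial_ne_zero n)).ne'
    have hvn : padicValNat p n = e := by rw [hn, padicValNat.prime_pow]
    rw [padicValNat.mul (pow_ne_zero _ hL0) (pow_ne_zero _ (by omega)), padicValNat.pow,
      padicValNat.pow, padicValNat.eq_zero_of_not_dvd hL, hvn, mul_zero, zero_add]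
    exact Odd.mul ⟨(n - 3) / 2, by omega⟩ heo
  obtain ⟨T, hT, hdisc⟩ := exists_mul_discC_F_eq hp heo.pos hn hn4
  refine natCast_mul_sq_ne_add_mul hp hval (c := L ^ (n - 1)) ?_ hT r ?_
  · exact fun h => hL (Int.natCast_dvd_natCast.1 (Int.Prime.dvd_pow' hp h))
  · rw [hr]
    exact_mod_cast hdisc

/-- If `p ≡ 1 (mod 4)` is prime, `e` is an odd positive integer and `n = p^e`,
then `disc(F n)` is not a rational square. -/
theorem stmt6 (p e n : ℕ) (hp : p.Prime) (hp4 : p % 4 = 1) (he : 0 < e) (heo : Odd e)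
    (hn : n = p ^ e) :
    ¬ ∃ r : ℚ, (r : ℂ) ^ 2 = discC (F n) :=
  stmt6_general p e n hp hp4 heo hn
end
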